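/- arXiv:2305.01448 — 7 statements merged into one kernel-verified Lean document; each statement's English description precedes it below -/
import Mathlib

section
/- If G is a well-covered graph (all minimal vertex covers have the same cardinality) without isolated vertices, then twice the size of a minimum vertex cover of G is at least the number of vertices of G. -/
/-- A vertex cover: a set of vertices meeting every edge. -/
def IsVertexCover {V : Type*} (G : SimpleGraph V) (C : Set V) : Prop :=
  ∀ ⦃v w : V⦄, G.Adj v w → v ∈ C ∨ w ∈ C

/-- A minimal vertex cover: no proper subset is a vertex cover. -/
def IsMinimalVertexCover {V : Type*} (G : SimpleGraph V) (C : Set V) : Prop :=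
  IsVertexCover G C ∧ ∀ D : Set V, D ⊂ C → ¬ IsVertexCover G D

/-- An independent set: pairwise non-adjacent vertices. -/
def IsIndepSet {V : Type*} (G : SimpleGraph V) (S : Set V) : Prop :=
  ∀ ⦃v : V⦄, v ∈ S → ∀ ⦃w : V⦄, w ∈ S → ¬ G.Adj v w

/-- A maximal independent set: no proper superset is independent. -/
def IsMaximalIndepSet {V : Type*} (G : SimpleGraph V) (S : Set V) : Prop :=
  IsIndepSet G S ∧ ∀ T : Set V, IsIndepSet G T → S ⊆ T → S = T

/-- Maximal independent subset of `U`. -/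
def MaxIndepIn {V : Type*} (G : SimpleGraph V) (U S : Set V) : Prop :=
  S ⊆ U ∧ IsIndepSet G S ∧ ∀ T : Set V, T ⊆ U → IsIndepSet G T → S ⊆ T → S = T

lemma exists_maxIndepIn {V : Type*} [Fintype V] (G : SimpleGraph V) (U S : Set V)
    (hSU : S ⊆ U) (hS : IsIndepSet G S) : ∃ T, S ⊆ T ∧ MaxIndepIn G U T := by
  obtain ⟨T, hT, hmax⟩ := Set.Finite.exists_maximalFor (Set.ncard)
    {T : Set V | S ⊆ T ∧ T ⊆ U ∧ IsIndepSet G T} (Set.toFinite _) ⟨S, subset_rfl, hSU, hS⟩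
  refine ⟨T, hT.1, hT.2.1, hT.2.2, ?_⟩
  intro T' hT'U hT' hTT'
  have hc : T.ncard = T'.ncard :=
    le_antisymm (Set.ncard_le_ncard hTT' (Set.toFinite _))
      (hmax ⟨hT.1.trans hTT', hT'U, hT'⟩ (Set.ncard_le_ncard hTT' (Set.toFinite _)))
  exact Set.eq_of_subset_of_ncard_le hTT' hc.ge (Set.toFinite _)

lemma key {V : Type*} [Fintype V] (G : SimpleGraph V) :
    ∀ n (U : Set V), U.ncard ≤ n →
    (∀ S T : Set V, MaxIndepIn G U S → MaxIndepIn G U T → S.ncard = T.ncard) →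
    (∀ v ∈ U, ∃ w ∈ U, G.Adj v w) →
    ∀ S, MaxIndepIn G U S → 2 * S.ncard ≤ U.ncard := by
  intro n
  induction n with
  | zero =>
    intro U hUn _ _ S hS
    have : S.ncard ≤ U.ncard := Set.ncard_le_ncard hS.1 (Set.toFinite _)
    omega
  | succ n ih =>
    intro U hUn hwc hiso S hS
    rcases Set.eq_empty_or_nonempty U with hUe | hUne
    · have : S.ncard ≤ U.ncard := Set.ncard_le_ncard hS.1 (Set.toFinite _)
      have : U.ncard = 0 := by simp [hUe]
      omega
    obtain ⟨v, hvU, hvmin⟩ := Set.exists_min_image U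
      (fun x => (G.neighborSet x ∩ U).ncard) (Set.toFinite _) hUne
    set K := G.neighborSet v ∩ U with hKdef
    set W := {w ∈ U | G.neighborSet w ∩ U = K} with hWdef
    set U' := U \ (W ∪ K) with hU'def
    have hvW : v ∈ W := ⟨hvU, rfl⟩
    have hKU : K ⊆ U := Set.inter_subset_right
    have hWU : W ⊆ U := fun w hw => hw.1
    have hKne : K.Nonempty := by
      obtain ⟨w, hwU, hadj⟩ := hiso v hvU
      exact ⟨w, hadj, hwU⟩
    have hWK : ∀ w ∈ W, ∀ k ∈ K, G.Adj w k := by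
      intro w hw k hk
      have hk' : k ∈ G.neighborSet w ∩ U := by rw [hw.2]; exact hk
      exact hk'.1
    have hWKdisj : Disjoint W K := by
      rw [Set.disjoint_left]
      intro w hw hwK
      exact G.irrefl (hWK w hw w hwK)
    have hWindep : IsIndepSet G W := by
      intro a ha b hb hadj
      have hbK : b ∈ K := by
        rw [← ha.2]; exact ⟨hadj, hWU hb⟩
      exact Set.disjoint_left.mp hWKdisj hb hbK
    have hWU'edge : ∀ w ∈ W, ∀ u ∈ U', ¬ G.Adj w u := by
      intro w hw u hu hadj
      have : u ∈ K := by rw [← hw.2]; exact ⟨hadj, hu.1⟩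
      exact hu.2 (Or.inr this)
    -- B1 : lifting maximal independent sets of U' to U
    have hB1 : ∀ R : Set V, MaxIndepIn G U' R → MaxIndepIn G U (W ∪ R) := by
      rintro R ⟨hRU', hRind, hRmax⟩
      refine ⟨Set.union_subset hWU (hRU'.trans Set.diff_subset), ?_, ?_⟩
      · rintro a (haW | haR) b (hbW | hbR) hadj
        · exact hWindep haW hbW hadj
        · exact hWU'edge a haW b (hRU' hbR) hadj
        · exact hWU'edge b hbW a (hRU' haR) hadj.symm
        · exact hRind haR hbR hadj
      · intro T hTU hTind hsub
        by_contra hne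
        obtain ⟨x, hxT, hxWR⟩ : ∃ x ∈ T, x ∉ W ∪ R := by
          by_contra h
          push_neg at h
          exact hne (Set.Subset.antisymm hsub h)
        have hxU : x ∈ U := hTU hxT
        by_cases hxK : x ∈ K
        · exact hTind (hsub (Or.inl hvW)) hxT hxK.1
        · have hxU' : x ∈ U' := ⟨hxU, fun h => h.elim (fun h' => hxWR (Or.inl h')) hxK⟩
          have hind : IsIndepSet G (R ∪ {x}) := by
            rintro a (haR | hax) b (hbR | hbx) hadj
            · exact hRind haR hbR hadj
            · rw [Set.mem_singleton_iff] at hbx; subst hbx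
              exact hTind (hsub (Or.inr haR)) hxT hadj
            · rw [Set.mem_singleton_iff] at hax; subst hax
              exact hTind hxT (hsub (Or.inr hbR)) hadj
            · rw [Set.mem_singleton_iff] at hax hbx; subst hax; subst hbx
              exact G.irrefl hadj
          have heq : R = R ∪ {x} :=
            hRmax (R ∪ {x}) (Set.union_subset hRU' (by simpa using hxU')) hind
              Set.subset_union_left
          have : x ∈ R := by rw [heq]; exact Or.inr rfl
          exact hxWR (Or.inr this)
    -- well-coveredness of U'
    have hwc' : ∀ A B : Set V, MaxIndepIn G U' A → MaxIndepIn G U' B →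
        A.ncard = B.ncard := by
      intro A B hA hB
      have h1 := hwc _ _ (hB1 A hA) (hB1 B hB)
      have hdA : Disjoint W A := by
        rw [Set.disjoint_right]
        intro a haA haW
        exact (hA.1 haA).2 (Or.inl haW)
      have hdB : Disjoint W B := by
        rw [Set.disjoint_right]
        intro a haB haW
        exact (hB.1 haB).2 (Or.inl haW)
      rw [Set.ncard_union_eq hdA (Set.toFinite _) (Set.toFinite _),
        Set.ncard_union_eq hdB (Set.toFinite _) (Set.toFinite _)] at h1
      omega
    -- U' has no isolated vertices
    have hiso' : ∀ u ∈ U', ∃ w ∈ U', G.Adj u w := by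
      intro u hu
      by_contra h
      push_neg at h
      have hsub : G.neighborSet u ∩ U ⊆ K := by
        rintro x ⟨hxadj, hxU⟩
        by_cases hxU' : x ∈ U'
        · exact absurd hxadj (h x hxU')
        · have hx : x ∈ W ∪ K := by
            by_contra hxx
            exact hxU' ⟨hxU, hxx⟩
          rcases hx with hxW | hxK
          · exfalso
            have huK : u ∈ K := by rw [← hxW.2]; exact ⟨(G.adj_symm hxadj), hu.1⟩
            exact hu.2 (Or.inr huK)
          · exact hxK
      have hcard : K.ncard ≤ (G.neighborSet u ∩ U).ncard := hvmin u hu.1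
      have heq : G.neighborSet u ∩ U = K :=
        Set.eq_of_subset_of_ncard_le hsub hcard (Set.toFinite _)
      exact hu.2 (Or.inl ⟨hu.1, heq⟩)
    -- a reference maximal independent set in U'
    obtain ⟨R₀, -, hR₀⟩ := exists_maxIndepIn G U' ∅ (Set.empty_subset _)
      (fun a ha => absurd ha (Set.notMem_empty a))
    -- Lemma A : |W| ≤ |K|
    obtain ⟨k, hkK⟩ := hKne
    have hkind : IsIndepSet G {k} := by
      intro a ha b hb hadj
      rw [Set.mem_singleton_iff] at ha hb
      subst ha; subst hb
      exact G.irrefl hadj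
    obtain ⟨M, hkM, hM⟩ := exists_maxIndepIn G U {k} (by simpa using hKU hkK) hkind
    have hMcard : M.ncard = (W ∪ R₀).ncard := hwc _ _ hM (hB1 R₀ hR₀)
    have hMW : Disjoint M W := by
      rw [Set.disjoint_left]
      intro a haM haW
      exact hM.2.1 haM (hkM rfl) (hWK a haW k hkK)
    have hMsplit : M ⊆ K ∪ U' := by
      intro a haM
      by_cases haK : a ∈ K
      · exact Or.inl haK
      · by_cases haW : a ∈ W
        · exact absurd haW (Set.disjoint_left.mp hMW haM)
        · exact Or.inr ⟨hM.1 haM, fun hh => hh.elim haW haK⟩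
    obtain ⟨R₁, hMU'R₁, hR₁⟩ := exists_maxIndepIn G U' (M ∩ U') Set.inter_subset_right
      (fun a ha b hb => hM.2.1 ha.1 hb.1)
    have h2 : (M ∩ U').ncard ≤ R₀.ncard := by
      have hcc := hwc' R₁ R₀ hR₁ hR₀
      calc (M ∩ U').ncard ≤ R₁.ncard := Set.ncard_le_ncard hMU'R₁ (Set.toFinite _)
        _ = R₀.ncard := hcc
    have h3 : M.ncard ≤ K.ncard + R₀.ncard := by
      have hMeq : M = (M ∩ K) ∪ (M ∩ U') := by
        rw [← Set.inter_union_distrib_left]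
        exact (Set.inter_eq_left.mpr hMsplit).symm
      calc M.ncard = ((M ∩ K) ∪ (M ∩ U')).ncard := by rw [← hMeq]
        _ ≤ (M ∩ K).ncard + (M ∩ U').ncard := Set.ncard_union_le _ _
        _ ≤ K.ncard + R₀.ncard :=
            add_le_add (Set.ncard_le_ncard Set.inter_subset_right (Set.toFinite _)) h2
    have hWR0disj : Disjoint W R₀ := by
      rw [Set.disjoint_right]
      intro a haR haW
      exact (hR₀.1 haR).2 (Or.inl haW)
    have hWR0 : (W ∪ R₀).ncard = W.ncard + R₀.ncard :=
      Set.ncard_union_eq hWR0disj (Set.toFinite _) (Set.toFinite _)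
    have hWleK : W.ncard ≤ K.ncard := by omega
    -- induction hypothesis on U'
    have hU'lt : U'.ncard < U.ncard := by
      refine Set.ncard_lt_ncard ?_ (Set.toFinite _)
      rw [Set.ssubset_iff_of_subset Set.diff_subset]
      exact ⟨v, hvU, fun h => h.2 (Or.inl hvW)⟩
    have hIH := ih U' (by omega) hwc' hiso' R₀ hR₀
    -- size decomposition of U
    have hUsplit : U.ncard = U'.ncard + (W.ncard + K.ncard) := by
      have hUeq : U = U' ∪ (W ∪ K) := by
        rw [hU'def, Set.diff_union_of_subset (Set.union_subset hWU hKU)]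
      have hd1 : Disjoint U' (W ∪ K) := Set.disjoint_sdiff_left
      rw [hUeq, Set.ncard_union_eq hd1 (Set.toFinite _) (Set.toFinite _),
        Set.ncard_union_eq hWKdisj (Set.toFinite _) (Set.toFinite _)]
    have hScard : S.ncard = (W ∪ R₀).ncard := hwc _ _ hS (hB1 R₀ hR₀)
    omega

/-- If G is well-covered without isolated vertices, then twice the size of a
minimum vertex cover is at least the number of vertices. -/
theorem stmt_0 {V : Type*} [Fintype V] (G : SimpleGraph V)
    (hwc : ∀ C D : Set V, IsMinimalVertexCover G C → IsMinimalVertexCover G D →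
      C.ncard = D.ncard)
    (hiso : ∀ v : V, ∃ w : V, G.Adj v w) :
    ∀ C : Set V, IsMinimalVertexCover G C → Fintype.card V ≤ 2 * C.ncard := by
  intro C hC
  -- complement of a maximal independent set (in univ) is a minimal vertex cover
  have compl_cover : ∀ A : Set V, MaxIndepIn G Set.univ A → IsMinimalVertexCover G Aᶜ := by
    intro A hA
    constructor
    · intro a b hadj
      by_contra h
      push_neg at h
      have ha : a ∈ A := Set.notMem_compl_iff.mp h.1
      have hb : b ∈ A := Set.notMem_compl_iff.mp h.2
      exact hA.2.1 ha hb hadj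
    · intro D hD hDcov
      have hDind : IsIndepSet G Dᶜ := by
        intro a ha b hb hadj
        rcases hDcov hadj with h1 | h1
        · exact ha h1
        · exact hb h1
      have hADc : A ⊆ Dᶜ := by
        intro a haA haD
        exact (hD.1 haD) haA
      have := hA.2.2 Dᶜ (Set.subset_univ _) hDind hADc
      have : D = Aᶜ := by rw [this, compl_compl]
      exact hD.2 (this ▸ subset_rfl)
  -- Cᶜ is a maximal independent set in univ
  have hSmax : MaxIndepIn G Set.univ Cᶜ := by
    refine ⟨Set.subset_univ _, ?_, ?_⟩
    · intro a ha b hb hadj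
      rcases hC.1 hadj with h1 | h1
      · exact ha h1
      · exact hb h1
    · intro T _ hTind hsub
      have hTc : Tᶜ ⊆ C := by
        intro a haT
        by_contra haC
        exact haT (hsub haC)
      have hTcov : IsVertexCover G Tᶜ := by
        intro a b hadj
        by_contra h
        push_neg at h
        exact hTind (Set.notMem_compl_iff.mp h.1) (Set.notMem_compl_iff.mp h.2) hadj
      by_cases heq : Tᶜ = C
      · rw [← heq, compl_compl]
      · exact absurd hTcov (hC.2 Tᶜ (ssubset_of_subset_of_ne hTc heq))
  have hwcU : ∀ A B : Set V, MaxIndepIn G Set.univ A → MaxIndepIn G Set.univ B →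
      A.ncard = B.ncard := by
    intro A B hA hB
    have h1 := hwc _ _ (compl_cover A hA) (compl_cover B hB)
    have h2 := Set.ncard_add_ncard_compl A
    have h3 := Set.ncard_add_ncard_compl B
    omega
  have hisoU : ∀ v ∈ (Set.univ : Set V), ∃ w ∈ (Set.univ : Set V), G.Adj v w := by
    intro v _
    obtain ⟨w, hw⟩ := hiso v
    exact ⟨w, Set.mem_univ w, hw⟩
  have hkey := key G ((Set.univ : Set V).ncard) Set.univ le_rfl hwcU hisoU Cᶜ hSmax
  have h1 := Set.ncard_add_ncard_compl C
  have h2 : (Set.univ : Set V).ncard = Fintype.card V := by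
    rw [Set.ncard_univ, Nat.card_eq_fintype_card]
  have h3 : Nat.card V = Fintype.card V := Nat.card_eq_fintype_card
  omega
end

section
/- Let G be a graph on {x_1,...,x_n, y_1,...,y_n} satisfying the structure conditions of Cohen–Macaulay very well-covered graphs (the x_i form a minimal vertex cover, the y_i form a maximal independent set, x_i y_i ∈ E(G), x_i y_j ∈ E(G) ⟹ i ≤ j, and every minimal vertex cover has size n). Let C be a minimal vertex cover of G, suppose C contains some vertex y_j, and let i be the minimal index with y_i ∈ C. Then (C \ {y_i}) ∪ {x_i} is also a minimal vertex cover of G. -/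
/-- Every vertex cover in a finite graph contains a minimal vertex cover. -/
lemma exists_minimal_cover_aux {V : Type*} [Fintype V] (G : SimpleGraph V) :
    ∀ k : ℕ, ∀ D : Set V, D.ncard ≤ k → IsVertexCover G D →
      ∃ E, E ⊆ D ∧ IsMinimalVertexCover G E := by
  intro k
  induction k with
  | zero =>
    intro D hDk hD
    have hD0 : D = ∅ :=
      (Set.ncard_eq_zero (Set.toFinite D)).mp (Nat.le_zero.mp hDk)
    refine ⟨D, subset_rfl, hD, fun E hE _ => ?_⟩
    rw [hD0] at hE
    exact hE.not_subset (Set.empty_subset E)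
  | succ k ih =>
    intro D hDk hD
    by_cases hmin : ∀ E : Set V, E ⊂ D → ¬ IsVertexCover G E
    · exact ⟨D, subset_rfl, hD, hmin⟩
    · push_neg at hmin
      obtain ⟨E, hE, hEcov⟩ := hmin
      have hlt : E.ncard < D.ncard := Set.ncard_lt_ncard hE (Set.toFinite D)
      obtain ⟨F, hF, hFmin⟩ := ih E (by omega) hEcov
      exact ⟨F, hF.trans hE.subset, hFmin⟩

/-- Lemma 4.2: swapping y_i for x_i at the minimal index i with y_i ∈ C gives again a
minimal vertex cover. -/
theorem stmt_4 {n : ℕ} (G : SimpleGraph (Fin n ⊕ Fin n))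
    (h1 : IsMinimalVertexCover G (Set.range Sum.inl))
    (h2 : IsMaximalIndepSet G (Set.range Sum.inr))
    (h3 : ∀ i : Fin n, G.Adj (Sum.inl i) (Sum.inr i))
    (h4 : ∀ i j : Fin n, G.Adj (Sum.inl i) (Sum.inr j) → i ≤ j)
    (hsize : ∀ C : Set (Fin n ⊕ Fin n), IsMinimalVertexCover G C → C.ncard = n)
    (C : Set (Fin n ⊕ Fin n)) (hC : IsMinimalVertexCover G C)
    (i : Fin n) (hiC : Sum.inr i ∈ C) (hmin : ∀ j : Fin n, Sum.inr j ∈ C → i ≤ j) :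
    IsMinimalVertexCover G ((C \ {Sum.inr i}) ∪ {Sum.inl i}) := by
  set C' : Set (Fin n ⊕ Fin n) := (C \ {Sum.inr i}) ∪ {Sum.inl i} with hC'def
  -- key step: C' is a vertex cover
  have key : ∀ v w : Fin n ⊕ Fin n, G.Adj v w → v ∈ C → v ∈ C' ∨ w ∈ C' := by
    intro v w hvw hv
    by_cases hvy : v = Sum.inr i
    · subst hvy
      by_cases hwC : w ∈ C
      · right
        left
        refine ⟨hwC, fun h => ?_⟩
        simp only [Set.mem_singleton_iff] at h
        exact G.irrefl (h ▸ hvw)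
      · cases w with
        | inr k =>
          exact absurd hvw (h2.1 (Set.mem_range_self i) (Set.mem_range_self k))
        | inl k =>
          have hk : k ≤ i := h4 k i hvw.symm
          rcases hC.1 (h3 k) with h | h
          · exact absurd h hwC
          · have hik : i ≤ k := hmin k h
            have : k = i := le_antisymm hk hik
            subst this
            right
            right
            rfl
    · left
      left
      exact ⟨hv, hvy⟩
  have hcov : IsVertexCover G C' := by
    intro v w hvw
    rcases hC.1 hvw with hv | hw
    · exact key v w hvw hv
    · exact (key w v hvw.symm hw).symm
  -- x_i ∉ C
  have hxC : Sum.inl i ∉ C := by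
    intro hx
    have hsub : C' ⊆ C := by
      intro v hv
      rcases hv with hv | hv
      · exact hv.1
      · simp only [Set.mem_singleton_iff] at hv
        exact hv ▸ hx
    have hne : C' ≠ C := by
      intro h
      have : Sum.inr i ∈ C' := h ▸ hiC
      rcases this with h' | h'
      · exact h'.2 rfl
      · simp at h'
    exact hC.2 C' (ssubset_of_subset_of_ne hsub hne) hcov
  -- cardinality of C'
  have hCn : C.ncard = n := hsize C hC
  have hnpos : 0 < n := i.pos
  have hxnot : Sum.inl i ∉ C \ {Sum.inr i} := fun h => hxC h.1
  have hC'card : C'.ncard = n := by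
    have h1' : (C \ {Sum.inr i}).ncard = C.ncard - 1 :=
      Set.ncard_diff_singleton_of_mem hiC
    have h2' : C'.ncard = (C \ {Sum.inr i}).ncard + 1 := by
      rw [hC'def, Set.union_singleton, Set.ncard_insert_of_notMem hxnot (Set.toFinite _)]
    omega
  refine ⟨hcov, ?_⟩
  intro D hD hDcov
  obtain ⟨E, hE, hEmin⟩ := exists_minimal_cover_aux G D.ncard D le_rfl hDcov
  have hEn : E.ncard = n := hsize E hEmin
  have hEC' : E ⊂ C' := lt_of_le_of_lt hE hD
  have : E.ncard < C'.ncard := Set.ncard_lt_ncard hEC' (Set.toFinite C')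
  omega
end

section
/- Let H be a graph on {x_1,...,x_n} and G = H* its whisker graph. A subset C of the vertices of G is a minimal vertex cover of G if and only if C contains exactly one of x_i, y_i for each i, and the set {x_i : x_i ∈ C} is a vertex cover of H such that whenever y_i ∈ C, all neighbors of x_i in H lie in C. -/
/-- The whisker graph `H*` of a graph `H` on `{x_1,…,x_n}`: vertices `x_i = Sum.inl i`
and `y_i = Sum.inr i`, edges those of `H` together with the whiskers `x_i y_i`. -/
def whisker {n : ℕ} (H : SimpleGraph (Fin n)) : SimpleGraph (Fin n ⊕ Fin n) :=
  SimpleGraph.fromRel (fun v w =>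
    (∃ i j : Fin n, v = Sum.inl i ∧ w = Sum.inl j ∧ H.Adj i j) ∨
    (∃ i : Fin n, v = Sum.inl i ∧ w = Sum.inr i))

/-! A vertex cover is minimal exactly when each of its vertices has a neighbour outside it.
In `H*` the whisker `x_i y_i` puts `x_i` or `y_i` into `C`; `y_i`, whose only neighbour is `x_i`,
may stay only if `x_i` is out, while `x_i` has the witness `y_i` as soon as `y_i` is out. -/

section VertexCover

variable {V : Type*} {G : SimpleGraph V} {C : Set V}

theorem isMinimalVertexCover_iff :
    IsMinimalVertexCover G C ↔ IsVertexCover G C ∧ ∀ v ∈ C, ∃ w, G.Adj v w ∧ w ∉ C := by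
  refine and_congr_right fun hC => ⟨fun hmin v hv => ?_, fun hnbr D hDC hD => ?_⟩
  · by_contra! hall
    refine hmin (C \ {v}) (Set.sdiff_singleton_ssubset.2 hv) fun a b hab => ?_
    by_cases hav : a = v
    · subst hav; exact .inr ⟨hall b hab, hab.ne'⟩
    by_cases hbv : b = v
    · subst hbv; exact .inl ⟨hall a hab.symm, hab.ne⟩
    exact (hC hab).imp (⟨·, hav⟩) (⟨·, hbv⟩)
  · obtain ⟨v, hvC, hvD⟩ := Set.exists_of_ssubset hDC
    obtain ⟨w, hvw, hwC⟩ := hnbr v hvC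
    exact (hD hvw).elim hvD fun hwD => hwC (hDC.1 hwD)

end VertexCover

section Whisker

variable {n : ℕ} {H : SimpleGraph (Fin n)} {i j : Fin n}

@[simp] theorem whisker_adj_inl_inl : (whisker H).Adj (.inl i) (.inl j) ↔ H.Adj i j := by
  simpa [whisker, H.adj_comm] using fun h => h.ne

@[simp] theorem whisker_adj_inl_inr : (whisker H).Adj (.inl i) (.inr j) ↔ i = j := by
  simp [whisker, eq_comm]

@[simp] theorem whisker_adj_inr_inl : (whisker H).Adj (.inr i) (.inl j) ↔ i = j := by
  simp [whisker]

@[simp] theorem not_whisker_adj_inr_inr : ¬ (whisker H).Adj (.inr i) (.inr j) := by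
  simp [whisker]

theorem isVertexCover_whisker_iff {C : Set (Fin n ⊕ Fin n)} :
    IsVertexCover (whisker H) C ↔
      (∀ i, .inl i ∈ C ∨ .inr i ∈ C) ∧ IsVertexCover H {i | .inl i ∈ C} := by
  refine ⟨fun hC => ⟨fun i => hC (whisker_adj_inl_inr.2 rfl),
    fun i j hij => hC (whisker_adj_inl_inl.2 hij)⟩, fun ⟨hwhisker, hH⟩ => ?_⟩
  rintro (i | i) (j | j) hij <;>
    simp only [whisker_adj_inl_inl, whisker_adj_inl_inr, whisker_adj_inr_inl,
      not_whisker_adj_inr_inr] at hij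
  · exact hH hij
  · subst hij; exact hwhisker i
  · subst hij; exact (hwhisker i).symm

end Whisker

/-- Characterization of minimal vertex covers of a whisker graph. -/
theorem stmt_7 {n : ℕ} (H : SimpleGraph (Fin n)) (C : Set (Fin n ⊕ Fin n)) :
    IsMinimalVertexCover (whisker H) C ↔
      ((∀ i : Fin n, Xor' (Sum.inl i ∈ C) (Sum.inr i ∈ C)) ∧
        IsVertexCover H {i : Fin n | Sum.inl i ∈ C} ∧
        (∀ i : Fin n, Sum.inr i ∈ C → ∀ j : Fin n, H.Adj i j → Sum.inl j ∈ C)) := by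
  rw [isMinimalVertexCover_iff, isVertexCover_whisker_iff, Sum.forall]
  simp only [Sum.exists, whisker_adj_inl_inl, whisker_adj_inl_inr, whisker_adj_inr_inl,
    not_whisker_adj_inr_inr, exists_eq_left', false_and, exists_false, or_false]
  constructor
  · rintro ⟨⟨hcover, hH⟩, -, hinr⟩
    refine ⟨fun i => (xor_iff_or_and_not_and _ _).2 ⟨hcover i, fun h => hinr i h.2 h.1⟩, hH, ?_⟩
    exact fun i hi j hij => (hH hij).resolve_left (hinr i hi)
  · rintro ⟨hxor, hH, -⟩
    have hexactly_one := fun i => (xor_iff_or_and_not_and _ _).1 (hxor i)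
    exact ⟨⟨fun i => (hexactly_one i).1, hH⟩, fun i hi => .inr fun h => (hexactly_one i).2 ⟨hi, h⟩,
      fun i hi h => (hexactly_one i).2 ⟨h, hi⟩⟩
end

section
/- Let G be a Cohen–Macaulay very well-covered graph on 2n vertices with the standard labeling, and let A ⊆ [n]. Then every minimal vertex cover of the induced subgraph G \ {x_i, y_i : i ∈ A} has cardinality n − |A|, i.e., the subgraph is again very well-covered. -/
/-!
A minimal vertex cover `C` of `G \ {x_i, y_i : i ∈ A}` contains an endpoint of each remaining
edge `x_i y_i`, and never both: if `x_i, y_i ∈ C`, minimality gives neighbours of `y_i` and of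
`x_i` outside `C`. The first is some `x_k`, as the `y`'s are independent, and the transitivity
condition (or, when the indices collide, `x_i y_j ∈ E ⟹ x_i x_j ∉ E`) forces the second to be
adjacent to `x_k` or to equal `y_k`, which yields an uncovered edge. So `C` picks exactly one
vertex from each of the `n - |A|` remaining pairs.
-/

open Set Sum

theorem IsMinimalVertexCover.exists_adj_notMem {V : Type*} {G : SimpleGraph V} {C : Set V}
    (hC : IsMinimalVertexCover G C) {a : V} (ha : a ∈ C) : ∃ u, G.Adj a u ∧ u ∉ C := by
  by_contra! hnbrs
  refine hC.2 (C \ {a}) (sdiff_singleton_ssubset.mpr ha) fun v w hvw => ?_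
  rcases hC.1 hvw with hv | hw
  · by_cases hva : v = a
    · subst hva
      exact .inr ⟨hnbrs w hvw, hvw.ne.symm⟩
    · exact .inl ⟨hv, hva⟩
  · by_cases hwa : w = a
    · subst hwa
      exact .inl ⟨hnbrs v hvw.symm, hvw.ne⟩
    · exact .inr ⟨hw, hwa⟩

theorem Set.ncard_eq_of_forall_inl_mem_iff {ι : Type*} {D : Set (ι ⊕ ι)} {B : Set ι}
    (hD : ∀ v ∈ D, Sum.elim id id v ∈ B) (hB : ∀ i ∈ B, inl i ∈ D ↔ inr i ∉ D) :
    D.ncard = B.ncard := by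
  have hinj : InjOn (Sum.elim id id) D := by
    rintro (i | i) hi (j | j) hj (rfl : i = j)
    all_goals first
      | rfl
      | exact absurd hj ((hB i (hD _ hi)).mp hi)
      | exact absurd hi ((hB i (hD _ hi)).mp hj)
  have himage : Sum.elim id id '' D = B := by
    refine (image_subset_iff.mpr hD).antisymm fun i hi => ?_
    by_cases hl : inl i ∈ D
    · exact ⟨_, hl, rfl⟩
    · exact ⟨inr i, not_not.mp (mt (hB i hi).mpr hl), rfl⟩
  rw [← himage, hinj.ncard_image]

theorem IsVertexCover.image_val {V : Type*} {G : SimpleGraph V} {S : Set V} {C : Set S}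
    (hC : IsVertexCover (G.induce S) C) {u v : V} (hu : u ∈ S) (hv : v ∈ S) (huv : G.Adj u v) :
    u ∈ Subtype.val '' C ∨ v ∈ Subtype.val '' C :=
  (hC (show (G.induce S).Adj ⟨u, hu⟩ ⟨v, hv⟩ from huv)).imp (⟨_, ·, rfl⟩) (⟨_, ·, rfl⟩)

theorem IsMinimalVertexCover.exists_adj_notMem_image_val {V : Type*} {G : SimpleGraph V}
    {S : Set V} {C : Set S} (hC : IsMinimalVertexCover (G.induce S) C) {a : V}
    (ha : a ∈ Subtype.val '' C) : ∃ u ∈ S, G.Adj a u ∧ u ∉ Subtype.val '' C := by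
  obtain ⟨a, ha, rfl⟩ := ha
  obtain ⟨u, hau, hu⟩ := hC.exists_adj_notMem ha
  exact ⟨u, u.2, hau, Subtype.val_injective.mem_set_image.not.mpr hu⟩

section StandardLabeling

variable {ι : Type*} {G : SimpleGraph (ι ⊕ ι)}

theorem adj_inl_or_eq_inr_of_adj_inl
    (hcross : ∀ i j : ι, G.Adj (inl i) (inr j) → ¬ G.Adj (inl i) (inl j))
    (htrans : ∀ i j k : ι, i ≠ j → j ≠ k → i ≠ k →
      ∀ z ∈ ({inl i, inr i} : Set (ι ⊕ ι)),
        G.Adj z (inl j) → G.Adj (inr j) (inl k) → G.Adj z (inl k))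
    {i k : ι} (hik : i ≠ k) (hyk : G.Adj (inr i) (inl k)) {z : ι ⊕ ι} (hzi : G.Adj z (inl i))
    (hz : z ≠ inr i) : G.Adj z (inl k) ∨ z = inr k := by
  obtain ⟨j, rfl | rfl⟩ : ∃ j, z = inl j ∨ z = inr j := by rcases z with j | j <;> simp
  · obtain rfl | hji := eq_or_ne j i
    · exact (G.irrefl hzi).elim
    obtain rfl | hjk := eq_or_ne j k
    · exact (hcross j i hyk.symm hzi).elim
    exact .inl (htrans j i k hji hik hjk _ (by simp) hzi hyk)
  · obtain rfl | hji := eq_or_ne j i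
    · exact absurd rfl hz
    obtain rfl | hjk := eq_or_ne j k
    · exact .inr rfl
    exact .inl (htrans j i k hji hik hjk _ (by simp) hzi hyk)

/-- `hcov` and `hcrit` say that `D` is a minimal vertex cover of `G.induce S`, transported to
the ambient vertex type. -/
theorem not_inl_mem_and_inr_mem (hindep : ∀ i j : ι, ¬ G.Adj (inr i) (inr j))
    (hdiag : ∀ i : ι, G.Adj (inl i) (inr i))
    (hcross : ∀ i j : ι, G.Adj (inl i) (inr j) → ¬ G.Adj (inl i) (inl j))
    (htrans : ∀ i j k : ι, i ≠ j → j ≠ k → i ≠ k →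
      ∀ z ∈ ({inl i, inr i} : Set (ι ⊕ ι)),
        G.Adj z (inl j) → G.Adj (inr j) (inl k) → G.Adj z (inl k))
    {S D : Set (ι ⊕ ι)} (hcov : ∀ u ∈ S, ∀ v ∈ S, G.Adj u v → u ∈ D ∨ v ∈ D)
    (hcrit : ∀ a ∈ D, ∃ u ∈ S, G.Adj a u ∧ u ∉ D) (i : ι) : ¬ (inl i ∈ D ∧ inr i ∈ D) := by
  rintro ⟨hx, hyi⟩
  obtain ⟨k | k, hkS, hyk, hkD⟩ := hcrit _ hyi
  swap
  · exact hindep _ _ hyk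
  have hik : i ≠ k := by rintro rfl; exact hkD hx
  obtain ⟨z, hzS, hzi, hzD⟩ := hcrit _ hx
  have hz : z ≠ inr i := by rintro rfl; exact hzD hyi
  rcases adj_inl_or_eq_inr_of_adj_inl hcross htrans hik hyk hzi.symm hz with hzk | rfl
  · exact (hcov _ hzS _ hkS hzk).elim hzD hkD
  · exact (hcov _ hkS _ hzS (hdiag k)).elim hkD hzD

end StandardLabeling

theorem stmt_8_general {n : ℕ} (G : SimpleGraph (Fin n ⊕ Fin n))
    (h2 : IsMaximalIndepSet G (Set.range Sum.inr))
    (h3 : ∀ i : Fin n, G.Adj (Sum.inl i) (Sum.inr i))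
    (h5 : ∀ i j : Fin n, G.Adj (Sum.inl i) (Sum.inr j) → ¬ G.Adj (Sum.inl i) (Sum.inl j))
    (h6 : ∀ i j k : Fin n, i ≠ j → j ≠ k → i ≠ k →
      ∀ z ∈ ({Sum.inl i, Sum.inr i} : Set (Fin n ⊕ Fin n)),
        G.Adj z (Sum.inl j) → G.Adj (Sum.inr j) (Sum.inl k) → G.Adj z (Sum.inl k))
    (A : Set (Fin n)) :
    ∀ C : Set ({v : Fin n ⊕ Fin n | Sum.elim id id v ∉ A}),
      IsMinimalVertexCover (G.induce {v : Fin n ⊕ Fin n | Sum.elim id id v ∉ A}) C →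
        C.ncard = n - A.ncard := by
  intro C hC
  have hcov : ∀ u ∈ {v | Sum.elim id id v ∉ A}, ∀ v ∈ {v | Sum.elim id id v ∉ A},
      G.Adj u v → u ∈ Subtype.val '' C ∨ v ∈ Subtype.val '' C :=
    fun _ hu _ hv => hC.1.image_val hu hv
  have hexactly_one (i) (hi : i ∈ Aᶜ) : inl i ∈ Subtype.val '' C ↔ inr i ∉ Subtype.val '' C :=
    ⟨fun hx hy => not_inl_mem_and_inr_mem (fun i j => h2.1 ⟨i, rfl⟩ ⟨j, rfl⟩) h3 h5 h6 hcov
        (fun _ => hC.exists_adj_notMem_image_val) i ⟨hx, hy⟩,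
      fun hy => (hcov _ hi _ hi (h3 i)).resolve_right hy⟩
  rw [← ncard_image_of_injective C Subtype.val_injective,
    ncard_eq_of_forall_inl_mem_iff (by rintro _ ⟨c, -, rfl⟩; exact c.2) hexactly_one,
    ncard_compl, Nat.card_fin]

/-- Lemma 3.3(b): deleting the pairs {x_i, y_i}, i ∈ A, from a Cohen–Macaulay very
well-covered graph yields a graph all of whose minimal vertex covers have size n - |A|. -/
theorem stmt_8 {n : ℕ} (G : SimpleGraph (Fin n ⊕ Fin n))
    (h1 : IsMinimalVertexCover G (Set.range Sum.inl))
    (h2 : IsMaximalIndepSet G (Set.range Sum.inr))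
    (h3 : ∀ i : Fin n, G.Adj (Sum.inl i) (Sum.inr i))
    (h4 : ∀ i j : Fin n, G.Adj (Sum.inl i) (Sum.inr j) → i ≤ j)
    (h5 : ∀ i j : Fin n, G.Adj (Sum.inl i) (Sum.inr j) → ¬ G.Adj (Sum.inl i) (Sum.inl j))
    (h6 : ∀ i j k : Fin n, i ≠ j → j ≠ k → i ≠ k →
      ∀ z ∈ ({Sum.inl i, Sum.inr i} : Set (Fin n ⊕ Fin n)),
        G.Adj z (Sum.inl j) → G.Adj (Sum.inr j) (Sum.inl k) → G.Adj z (Sum.inl k))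
    (A : Set (Fin n)) :
    ∀ C : Set ({v : Fin n ⊕ Fin n | Sum.elim id id v ∉ A}),
      IsMinimalVertexCover (G.induce {v : Fin n ⊕ Fin n | Sum.elim id id v ∉ A}) C →
        C.ncard = n - A.ncard :=
  stmt_8_general G h2 h3 h5 h6 A
end

section
/- Let G be a Cohen–Macaulay very well-covered graph with 2n vertices (standard labeling). Then for every i ∈ [n] there exists a minimal vertex cover C of G such that y_i ∈ C and x_j ∈ C for all j < i, i.e., the minimal index j with y_j ∈ C equals i. -/
/-!
Write `x_j = inl j`, `y_j = inr j` and let `N = {j | x_i ~ y_j}`. The candidate cover takes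
`y_j` for `j ∈ N` and `x_j` for `j ∉ N`; it contains `y_i`, and by the ordering condition
`x_i y_j ∈ E → i ≤ j` also every `x_j` with `j < i`. Transitivity makes `N` closed upwards
along edges `x_a y_b`, and together with `x_i y_j ∈ E → x_i x_j ∉ E` it forbids an edge
`x_a x_b` with `a, b ∈ N`; these are exactly the edges the candidate could miss, since the
`y`'s are independent. A cover picking one vertex from each edge `x_j y_j` is minimal.
-/

namespace VeryWellCovered

variable {α : Type*} {G : SimpleGraph (α ⊕ α)}

/-- Condition (v) of the characterization of Cohen–Macaulay very well-covered graphs. -/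
def XYTransitive (G : SimpleGraph (α ⊕ α)) : Prop :=
  ∀ i j k : α, i ≠ j → j ≠ k → i ≠ k →
    ∀ z ∈ ({Sum.inl i, Sum.inr i} : Set (α ⊕ α)),
      G.Adj z (Sum.inl j) → G.Adj (Sum.inr j) (Sum.inl k) → G.Adj z (Sum.inl k)

def transversal (A : Set α) : Set (α ⊕ α) :=
  {v | v.elim (· ∈ A) (· ∉ A)}

lemma isVertexCover_transversal {A : Set α} (hindep : IsIndepSet G (Set.range Sum.inr))
    (hxy : ∀ a b, G.Adj (Sum.inl a) (Sum.inr b) → b ∈ A → a ∈ A)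
    (hxx : ∀ a b, G.Adj (Sum.inl a) (Sum.inl b) → a ∈ A ∨ b ∈ A) :
    IsVertexCover G (transversal A) := by
  rintro (a | a) (b | b) hab
  · exact hxx a b hab
  · by_cases hb : b ∈ A
    · exact .inl (hxy a b hab hb)
    · exact .inr hb
  · by_cases ha : a ∈ A
    · exact .inr (hxy b a hab.symm ha)
    · exact .inl ha
  · exact absurd hab (hindep ⟨a, rfl⟩ ⟨b, rfl⟩)

lemma _root_.IsVertexCover.isMinimalVertexCover_transversal {A : Set α}
    (hC : IsVertexCover G (transversal A)) (hmatch : ∀ j, G.Adj (Sum.inl j) (Sum.inr j)) :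
    IsMinimalVertexCover G (transversal A) := by
  refine ⟨hC, fun D hDC hD => ?_⟩
  obtain ⟨v, hvC, hvD⟩ := Set.exists_of_ssubset hDC
  rcases v with j | j
  · have hyD : Sum.inr j ∈ D := (hD (hmatch j)).resolve_left hvD
    exact hDC.1 hyD hvC
  · have hxD : Sum.inl j ∈ D := (hD (hmatch j)).resolve_right hvD
    exact hvC (hDC.1 hxD)

lemma adj_inl_inr_of_adj_inl_inr (htrans : XYTransitive G)
    (hmatch : ∀ j, G.Adj (Sum.inl j) (Sum.inr j)) {i a b : α}
    (hab : G.Adj (Sum.inl a) (Sum.inr b)) (hia : G.Adj (Sum.inl i) (Sum.inr a)) :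
    G.Adj (Sum.inl i) (Sum.inr b) := by
  rcases eq_or_ne a b with rfl | hne_ab
  · exact hia
  rcases eq_or_ne a i with rfl | hne_ai
  · exact hab
  rcases eq_or_ne b i with rfl | hne_bi
  · exact hmatch b
  exact (htrans b a i hne_ab.symm hne_ai hne_bi _ (by simp) hab.symm hia.symm).symm

lemma not_adj_inl_inr_of_adj_inl_inl (htrans : XYTransitive G)
    (hnot : ∀ i j, G.Adj (Sum.inl i) (Sum.inr j) → ¬ G.Adj (Sum.inl i) (Sum.inl j)) {i a b : α}
    (hab : G.Adj (Sum.inl a) (Sum.inl b)) (hia : G.Adj (Sum.inl i) (Sum.inr a)) :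
    ¬ G.Adj (Sum.inl i) (Sum.inr b) := by
  intro hib
  have hne_ab : a ≠ b := fun h => G.ne_of_adj hab (congrArg Sum.inl h)
  rcases eq_or_ne a i with rfl | hne_ai
  · exact hnot a b hib hab
  rcases eq_or_ne b i with rfl | hne_bi
  · exact hnot b a hia hab.symm
  exact hnot i a hia (htrans a b i hne_ab hne_bi hne_ai _ (by simp) hab hib.symm).symm

end VeryWellCovered

open VeryWellCovered in
theorem stmt_11_general {n : ℕ} (G : SimpleGraph (Fin n ⊕ Fin n))
    (h2 : IsMaximalIndepSet G (Set.range Sum.inr))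
    (h3 : ∀ i : Fin n, G.Adj (Sum.inl i) (Sum.inr i))
    (h4 : ∀ i j : Fin n, G.Adj (Sum.inl i) (Sum.inr j) → i ≤ j)
    (h5 : ∀ i j : Fin n, G.Adj (Sum.inl i) (Sum.inr j) → ¬ G.Adj (Sum.inl i) (Sum.inl j))
    (h6 : ∀ i j k : Fin n, i ≠ j → j ≠ k → i ≠ k →
      ∀ z ∈ ({Sum.inl i, Sum.inr i} : Set (Fin n ⊕ Fin n)),
        G.Adj z (Sum.inl j) → G.Adj (Sum.inr j) (Sum.inl k) → G.Adj z (Sum.inl k)) :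
    ∀ i : Fin n, ∃ C : Set (Fin n ⊕ Fin n), IsMinimalVertexCover G C ∧
      Sum.inr i ∈ C ∧ ∀ j : Fin n, j < i → Sum.inl j ∈ C := by
  intro i
  have hcover : IsVertexCover G (transversal {j | ¬ G.Adj (Sum.inl i) (Sum.inr j)}) :=
    isVertexCover_transversal h2.1
      (fun _ _ hab hb ha => hb (adj_inl_inr_of_adj_inl_inr h6 h3 hab ha))
      (fun _ _ hab => not_and_or.mp fun ⟨ha, hb⟩ =>
        not_adj_inl_inr_of_adj_inl_inl h6 h5 hab ha hb)
  refine ⟨_, hcover.isMinimalVertexCover_transversal h3, fun hi => hi (h3 i), ?_⟩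
  intro j hji hij
  exact (h4 i j hij).not_gt hji

/-- Lemma 4.10: for every i there is a minimal vertex cover C with y_i ∈ C and
x_j ∈ C for all j < i. -/
theorem stmt_11 {n : ℕ} (G : SimpleGraph (Fin n ⊕ Fin n))
    (h1 : IsMinimalVertexCover G (Set.range Sum.inl))
    (h2 : IsMaximalIndepSet G (Set.range Sum.inr))
    (h3 : ∀ i : Fin n, G.Adj (Sum.inl i) (Sum.inr i))
    (h4 : ∀ i j : Fin n, G.Adj (Sum.inl i) (Sum.inr j) → i ≤ j)
    (h5 : ∀ i j : Fin n, G.Adj (Sum.inl i) (Sum.inr j) → ¬ G.Adj (Sum.inl i) (Sum.inl j))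
    (h6 : ∀ i j k : Fin n, i ≠ j → j ≠ k → i ≠ k →
      ∀ z ∈ ({Sum.inl i, Sum.inr i} : Set (Fin n ⊕ Fin n)),
        G.Adj z (Sum.inl j) → G.Adj (Sum.inr j) (Sum.inl k) → G.Adj z (Sum.inl k)) :
    ∀ i : Fin n, ∃ C : Set (Fin n ⊕ Fin n), IsMinimalVertexCover G C ∧
      Sum.inr i ∈ C ∧ ∀ j : Fin n, j < i → Sum.inl j ∈ C :=
  stmt_11_general G h2 h3 h4 h5 h6
end

section
/- Let G be a Cohen–Macaulay very well-covered graph with 2n vertices (standard labeling), let G_1 = G \ {x_i, y_i : x_i ∈ N(x_1) or y_i ∈ N(x_1)}, and let z_{N(x_1)} be the product of the variables in N(x_1). Then the cover ideal satisfies J(G) = z_{N(x_1)} · J(G_1) + x_1 · J(G \ {x_1, y_1}). -/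
/-- The cover ideal of a graph: the monomial ideal generated by the products of the
variables over the minimal vertex covers of G. -/
noncomputable def coverIdeal (K : Type*) [Field K] {V : Type*} [DecidableEq V]
    (G : SimpleGraph V) : Ideal (MvPolynomial V K) :=
  Ideal.span {m | ∃ C : Finset V, IsMinimalVertexCover G ↑C ∧
    m = ∏ v ∈ C, MvPolynomial.X v}

/-- `u` is (the exponent vector of) a minimal monomial generator of the monomial
ideal `I`: the monomial `X^u` lies in `I` and no proper divisor of it lies in `I`. -/
def IsMinimalGen {K : Type*} [Field K] {V : Type*}
    (I : Ideal (MvPolynomial V K)) (u : V →₀ ℕ) : Prop :=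
  MvPolynomial.monomial u (1 : K) ∈ I ∧
    ∀ v : V →₀ ℕ, v ≤ u → MvPolynomial.monomial v (1 : K) ∈ I → v = u

/-- The cover ideal of the induced subgraph on a vertex subset W, viewed as a monomial
ideal of the full polynomial ring. -/
noncomputable def coverIdealOn (K : Type*) [Field K] {V : Type*} [DecidableEq V]
    (G : SimpleGraph V) (W : Set V) : Ideal (MvPolynomial V K) :=
  Ideal.span {m | ∃ C : Finset V, ↑C ⊆ W ∧
    IsMinimalVertexCover (G.induce W) {v : W | (v : V) ∈ C} ∧
    m = ∏ v ∈ C, MvPolynomial.X v}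

/-! A minimal vertex cover `C` of `G` either contains `x₁` or not. If it does, it misses the
leaf `y₁` (whose only neighbour is `x₁`), and `C \ {x₁}` is a minimal vertex cover of
`G \ {x₁, y₁}`. If it does not, it contains `N(x₁)`; the structure conditions force every vertex
outside `G₁` and the closed neighbourhood `N[x₁]` to have all its neighbours in `N[x₁]`, so
`C \ N(x₁)` is a minimal vertex cover of `G₁`. Both correspondences are reversible, which
matches the generators of the two sides. -/

section VertexCover

variable {V : Type*} {G : SimpleGraph V}

theorem isMinimalVertexCover_iff_forall_exists_adj_notMem {C : Set V} :
    IsMinimalVertexCover G C ↔ IsVertexCover G C ∧ ∀ v ∈ C, ∃ w, G.Adj v w ∧ w ∉ C := by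
  refine and_congr_right fun hC => ⟨fun hmin v hv => ?_, fun hpriv D hDC hD => ?_⟩
  · by_contra! hN
    refine hmin (C \ {v}) (Set.sdiff_singleton_ssubset.2 hv) fun a b hab => ?_
    by_cases ha : a = v
    · subst ha
      exact Or.inr ⟨hN b hab, (G.ne_of_adj hab).symm⟩
    by_cases hb : b = v
    · subst hb
      exact Or.inl ⟨hN a hab.symm, ha⟩
    exact (hC hab).imp (fun h => ⟨h, ha⟩) (fun h => ⟨h, hb⟩)
  · obtain ⟨v, hvC, hvD⟩ := Set.exists_of_ssubset hDC
    obtain ⟨w, hvw, hwC⟩ := hpriv v hvC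
    exact (hD hvw).elim hvD fun hwD => hwC (hDC.1 hwD)

theorem isMinimalVertexCover_induce_iff {W D : Set V} (hDW : D ⊆ W) :
    IsMinimalVertexCover (G.induce W) {v : W | (v : V) ∈ D} ↔
      (∀ a ∈ W, ∀ b ∈ W, G.Adj a b → a ∈ D ∨ b ∈ D) ∧
        ∀ v ∈ D, ∃ w ∈ W, G.Adj v w ∧ w ∉ D := by
  rw [isMinimalVertexCover_iff_forall_exists_adj_notMem]
  refine and_congr ⟨fun h a ha b hb hab => h (v := ⟨a, ha⟩) (w := ⟨b, hb⟩) hab,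
    fun h a b hab => h a a.2 b b.2 hab⟩ ⟨fun h v hv => ?_, fun h v hv => ?_⟩
  · obtain ⟨w, hvw, hwD⟩ := h ⟨v, hDW hv⟩ hv
    exact ⟨w, w.2, hvw, hwD⟩
  · obtain ⟨w, hwW, hvw, hwD⟩ := h v hv
    exact ⟨⟨w, hwW⟩, hvw, hwD⟩

section Leaf

variable {x y : V} {C D : Set V}

theorem IsMinimalVertexCover.induce_diff_singleton_of_leaf (hy : ∀ w, G.Adj w y → w = x)
    (hC : IsMinimalVertexCover G C) (hxC : x ∈ C) :
    C \ {x} ⊆ {v | v ≠ x ∧ v ≠ y} ∧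
      IsMinimalVertexCover (G.induce {v | v ≠ x ∧ v ≠ y}) {v | (v : V) ∈ C \ {x}} := by
  rw [isMinimalVertexCover_iff_forall_exists_adj_notMem] at hC
  obtain ⟨hcov, hpriv⟩ := hC
  -- `y` is not in `C`: its only neighbour `x` is.
  have hyC : y ∉ C := fun hyC => by
    obtain ⟨w, hyw, hwC⟩ := hpriv y hyC
    exact hwC (hy w hyw.symm ▸ hxC)
  have hsub : C \ {x} ⊆ {v | v ≠ x ∧ v ≠ y} :=
    fun v ⟨hvC, hvx⟩ => ⟨hvx, fun hvy => hyC (hvy ▸ hvC)⟩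
  refine ⟨hsub, (isMinimalVertexCover_induce_iff hsub).2 ⟨?_, fun v ⟨hvC, hvx⟩ => ?_⟩⟩
  · exact fun a ha b hb hab => (hcov hab).imp (fun h => ⟨h, ha.1⟩) (fun h => ⟨h, hb.1⟩)
  · obtain ⟨w, hvw, hwC⟩ := hpriv v hvC
    refine ⟨w, ⟨fun hwx => hwC (hwx ▸ hxC), fun hwy => hvx (hy v (hwy ▸ hvw))⟩, hvw,
      fun hw => hwC hw.1⟩

theorem isMinimalVertexCover_insert_of_induce (hxy : G.Adj x y)
    (hy : ∀ w, G.Adj w y → w = x) (hDW : D ⊆ {v | v ≠ x ∧ v ≠ y})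
    (hD : IsMinimalVertexCover (G.induce {v | v ≠ x ∧ v ≠ y}) {v | (v : V) ∈ D}) :
    IsMinimalVertexCover G (insert x D) := by
  obtain ⟨hcov, hpriv⟩ := (isMinimalVertexCover_induce_iff hDW).1 hD
  refine isMinimalVertexCover_iff_forall_exists_adj_notMem.2 ⟨fun a b hab => ?_, ?_⟩
  · by_cases hax : a = x
    · exact Or.inl (Or.inl hax)
    by_cases hbx : b = x
    · exact Or.inr (Or.inl hbx)
    have hay : a ≠ y := fun hay => hbx (hy b (hay ▸ hab.symm))
    have hby : b ≠ y := fun hby => hax (hy a (hby ▸ hab))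
    exact (hcov a ⟨hax, hay⟩ b ⟨hbx, hby⟩ hab).imp Or.inr Or.inr
  · rintro v (rfl | hvD)
    · exact ⟨y, hxy, fun h => h.elim (G.ne_of_adj hxy).symm fun hyD => (hDW hyD).2 rfl⟩
    · obtain ⟨w, hwW, hvw, hwD⟩ := hpriv v hvD
      exact ⟨w, hvw, fun h => h.elim hwW.1 hwD⟩

end Leaf

section Neighborhood

def NeighborsInClosedNbhdOutside (G : SimpleGraph V) (x : V) (W : Set V) : Prop :=
  ∀ u v, G.Adj u v → u ∉ W → u ≠ x → ¬ G.Adj x u → v = x ∨ G.Adj x v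

variable {x : V} {W C D : Set V}

theorem IsMinimalVertexCover.induce_diff_neighborSet_of_notMem
    (hWN : ∀ v ∈ W, ¬ G.Adj x v) (hout : NeighborsInClosedNbhdOutside G x W)
    (hC : IsMinimalVertexCover G C) (hxC : x ∉ C) :
    C \ G.neighborSet x ⊆ W ∧
      IsMinimalVertexCover (G.induce W) {v | (v : V) ∈ C \ G.neighborSet x} := by
  rw [isMinimalVertexCover_iff_forall_exists_adj_notMem] at hC
  obtain ⟨hcov, hpriv⟩ := hC
  have hNC : G.neighborSet x ⊆ C := fun w hxw => (hcov hxw).resolve_left hxC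
  have hsub : C \ G.neighborSet x ⊆ W := by
    rintro v ⟨hvC, hxv⟩
    by_contra hvW
    obtain ⟨w, hvw, hwC⟩ := hpriv v hvC
    rcases hout v w hvw hvW (fun hvx => hxC (hvx ▸ hvC)) hxv with rfl | hxw
    · exact hxv hvw.symm
    · exact hwC (hNC hxw)
  refine ⟨hsub, (isMinimalVertexCover_induce_iff hsub).2 ⟨?_, fun v ⟨hvC, hxv⟩ => ?_⟩⟩
  · exact fun a ha b hb hab => (hcov hab).imp (fun h => ⟨h, hWN a ha⟩) (fun h => ⟨h, hWN b hb⟩)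
  · obtain ⟨w, hvw, hwC⟩ := hpriv v hvC
    have hxw : ¬ G.Adj x w := fun hxw => hwC (hNC hxw)
    have hwW : w ∈ W := by
      by_contra hwW
      rcases hout w v hvw.symm hwW (fun hwx => hxv (hwx ▸ hvw.symm)) hxw with rfl | hxv'
      · exact hxC hvC
      · exact hxv hxv'
    exact ⟨w, hwW, hvw, fun hw => hwC hw.1⟩

theorem isMinimalVertexCover_neighborSet_union_of_induce (hxW : x ∉ W)
    (hWN : ∀ v ∈ W, ¬ G.Adj x v) (hout : NeighborsInClosedNbhdOutside G x W)
    (hDW : D ⊆ W) (hD : IsMinimalVertexCover (G.induce W) {v | (v : V) ∈ D}) :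
    IsMinimalVertexCover G (G.neighborSet x ∪ D) := by
  obtain ⟨hcov, hpriv⟩ := (isMinimalVertexCover_induce_iff hDW).1 hD
  refine isMinimalVertexCover_iff_forall_exists_adj_notMem.2 ⟨fun a b hab => ?_, ?_⟩
  · by_cases hxa : G.Adj x a
    · exact Or.inl (Or.inl hxa)
    by_cases hxb : G.Adj x b
    · exact Or.inr (Or.inl hxb)
    have hax : a ≠ x := fun hax => hxb (hax ▸ hab)
    have hbx : b ≠ x := fun hbx => hxa (hbx ▸ hab.symm)
    have haW : a ∈ W := by_contra fun haW =>
      (hout a b hab haW hax hxa).elim hbx hxb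
    have hbW : b ∈ W := by_contra fun hbW =>
      (hout b a hab.symm hbW hbx hxb).elim hax hxa
    exact (hcov a haW b hbW hab).imp Or.inr Or.inr
  · rintro v (hxv | hvD)
    · exact ⟨x, hxv.symm, fun h => h.elim G.irrefl fun hxD => hxW (hDW hxD)⟩
    · obtain ⟨w, hwW, hvw, hwD⟩ := hpriv v hvD
      exact ⟨w, hvw, fun h => h.elim (hWN w hwW) hwD⟩

end Neighborhood

end VertexCover

section CoverIdeal

open SimpleGraph MvPolynomial

theorem coverIdeal_eq_of_leaf (K : Type*) [Field K] {V : Type*} [DecidableEq V]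
    (G : SimpleGraph V) {x y : V} [Fintype (G.neighborSet x)] (hxy : G.Adj x y)
    (hy : ∀ w, G.Adj w y → w = x) {W : Set V} (hxW : x ∉ W) (hWN : ∀ v ∈ W, ¬ G.Adj x v)
    (hout : NeighborsInClosedNbhdOutside G x W) :
    coverIdeal K G =
      Ideal.span {∏ v ∈ G.neighborFinset x, X v} * coverIdealOn K G W +
        Ideal.span {X x} * coverIdealOn K G {v | v ≠ x ∧ v ≠ y} := by
  rw [coverIdeal, coverIdealOn, coverIdealOn, Ideal.span_mul_span', Ideal.span_mul_span',
    Submodule.add_eq_sup, ← Ideal.span_union]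
  congr 1
  ext m
  simp only [Set.mem_union, Set.mem_mul, Set.mem_ofPred_eq, Set.mem_singleton_iff]
  constructor
  · rintro ⟨C, hC, rfl⟩
    by_cases hxC : x ∈ C
    · obtain ⟨hsub, hmin⟩ := hC.induce_diff_singleton_of_leaf hy hxC
      rw [← Finset.coe_erase] at hsub hmin
      exact Or.inr ⟨_, rfl, _, ⟨C.erase x, hsub, hmin, rfl⟩, Finset.mul_prod_erase C _ hxC⟩
    · obtain ⟨hsub, hmin⟩ := hC.induce_diff_neighborSet_of_notMem hWN hout hxC
      rw [← coe_neighborFinset, ← Finset.coe_sdiff] at hsub hmin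
      have hNC : G.neighborFinset x ⊆ C := fun w hxw =>
        (hC.1 ((mem_neighborFinset G x w).1 hxw)).resolve_left hxC
      exact Or.inl ⟨_, rfl, _, ⟨C \ G.neighborFinset x, hsub, hmin, rfl⟩,
        (mul_comm _ _).trans (Finset.prod_sdiff hNC)⟩
  · rintro (⟨_, rfl, _, ⟨D, hDW, hD, rfl⟩, rfl⟩ | ⟨_, rfl, _, ⟨D, hDW, hD, rfl⟩, rfl⟩)
    · have hdisj : Disjoint (G.neighborFinset x) D := Finset.disjoint_left.2 fun v hxv hvD =>
        hWN v (hDW hvD) ((mem_neighborFinset G x v).1 hxv)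
      refine ⟨G.neighborFinset x ∪ D, ?_, (Finset.prod_union hdisj).symm⟩
      rw [Finset.coe_union, coe_neighborFinset]
      exact isMinimalVertexCover_neighborSet_union_of_induce hxW hWN hout hDW hD
    · have hxD : x ∉ D := fun hxD => (hDW hxD).1 rfl
      refine ⟨insert x D, ?_, (Finset.prod_insert hxD).symm⟩
      rw [Finset.coe_insert]
      exact isMinimalVertexCover_insert_of_induce hxy hy hDW hD

end CoverIdeal

section StandardLabeling

variable {n : ℕ} {G : SimpleGraph (Fin n ⊕ Fin n)}

theorem eq_inl_of_adj_inr_zero (hn : 0 < n) (hind : IsIndepSet G (Set.range Sum.inr))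
    (hle : ∀ i j : Fin n, G.Adj (Sum.inl i) (Sum.inr j) → i ≤ j) {w : Fin n ⊕ Fin n}
    (hw : G.Adj w (Sum.inr ⟨0, hn⟩)) : w = Sum.inl ⟨0, hn⟩ := by
  rcases w with i | i
  · exact congrArg Sum.inl (Fin.ext (Nat.le_zero.1 (hle i _ hw)))
  · exact (hind ⟨i, rfl⟩ ⟨_, rfl⟩ hw).elim

variable {i₀ : Fin n}
  (htrans : ∀ i j k : Fin n, i ≠ j → j ≠ k → i ≠ k →
    ∀ z ∈ ({Sum.inl i, Sum.inr i} : Set (Fin n ⊕ Fin n)),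
      G.Adj z (Sum.inl j) → G.Adj (Sum.inr j) (Sum.inl k) → G.Adj z (Sum.inl k))

include htrans in
theorem adj_of_adj_inl_of_adj_inr (hleaf : ∀ w, G.Adj w (Sum.inr i₀) → w = Sum.inl i₀)
    {i : Fin n} (hi : i ≠ i₀) (hxy : G.Adj (Sum.inl i₀) (Sum.inr i)) {b : Fin n ⊕ Fin n}
    (hb : G.Adj (Sum.inl i) b) : b = Sum.inl i₀ ∨ G.Adj (Sum.inl i₀) b := by
  rcases b with k | k
  · by_cases hk : k = i₀
    · exact Or.inl (hk ▸ rfl)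
    have hki : k ≠ i := by rintro rfl; exact G.irrefl hb
    exact Or.inr (htrans k i i₀ hki hi hk _ (by simp) hb.symm hxy.symm).symm
  · by_cases hki : k = i
    · exact Or.inr (hki ▸ hxy)
    have hk : k ≠ i₀ := by rintro rfl; exact hi (Sum.inl_injective (hleaf _ hb))
    exact Or.inr (htrans k i i₀ hki hi hk _ (by simp) hb.symm hxy.symm).symm

include htrans in
theorem adj_of_adj_inr_of_adj_inl (hind : IsIndepSet G (Set.range Sum.inr)) {i : Fin n}
    (hi : i ≠ i₀) (hxx : G.Adj (Sum.inl i₀) (Sum.inl i)) {b : Fin n ⊕ Fin n}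
    (hb : G.Adj (Sum.inr i) b) : b = Sum.inl i₀ ∨ G.Adj (Sum.inl i₀) b := by
  rcases b with k | k
  · by_cases hk : k = i₀
    · exact Or.inl (hk ▸ rfl)
    by_cases hki : k = i
    · exact Or.inr (hki ▸ hxx)
    exact Or.inr (htrans i₀ i k (Ne.symm hi) (Ne.symm hki) (Ne.symm hk) _ (by simp) hxx hb)
  · exact (hind ⟨i, rfl⟩ ⟨k, rfl⟩ hb).elim

include htrans in
theorem neighborsInClosedNbhdOutside_pairs (hind : IsIndepSet G (Set.range Sum.inr))
    (hmatch : ∀ i : Fin n, G.Adj (Sum.inl i) (Sum.inr i))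
    (hleaf : ∀ w, G.Adj w (Sum.inr i₀) → w = Sum.inl i₀) :
    NeighborsInClosedNbhdOutside G (Sum.inl i₀) {v : Fin n ⊕ Fin n |
      ¬ G.Adj (Sum.inl i₀) (Sum.inl (Sum.elim id id v)) ∧
      ¬ G.Adj (Sum.inl i₀) (Sum.inr (Sum.elim id id v))} := by
  intro u v huv huW hux hxu
  rw [Set.mem_ofPred_eq, not_and_or, not_not, not_not] at huW
  rcases u with i | i
  · have hi : i ≠ i₀ := fun h => hux (h ▸ rfl)
    exact adj_of_adj_inl_of_adj_inr htrans hleaf hi (huW.resolve_left hxu) huv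
  · have hi : i ≠ i₀ := by rintro rfl; exact hxu (hmatch _)
    exact adj_of_adj_inr_of_adj_inl htrans hind hi (huW.resolve_right hxu) huv

end StandardLabeling

theorem stmt_13_general {n : ℕ} (hn : 0 < n) (K : Type*) [Field K]
    (G : SimpleGraph (Fin n ⊕ Fin n)) [DecidableRel G.Adj]
    (h2 : IsMaximalIndepSet G (Set.range Sum.inr))
    (h3 : ∀ i : Fin n, G.Adj (Sum.inl i) (Sum.inr i))
    (h4 : ∀ i j : Fin n, G.Adj (Sum.inl i) (Sum.inr j) → i ≤ j)
    (h6 : ∀ i j k : Fin n, i ≠ j → j ≠ k → i ≠ k →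
      ∀ z ∈ ({Sum.inl i, Sum.inr i} : Set (Fin n ⊕ Fin n)),
        G.Adj z (Sum.inl j) → G.Adj (Sum.inr j) (Sum.inl k) → G.Adj z (Sum.inl k)) :
    coverIdeal K G =
      Ideal.span {∏ v ∈ G.neighborFinset (Sum.inl (⟨0, hn⟩ : Fin n)), MvPolynomial.X v} *
        coverIdealOn K G {v : Fin n ⊕ Fin n |
          ¬ G.Adj (Sum.inl (⟨0, hn⟩ : Fin n)) (Sum.inl (Sum.elim id id v)) ∧
          ¬ G.Adj (Sum.inl (⟨0, hn⟩ : Fin n)) (Sum.inr (Sum.elim id id v))} +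
      Ideal.span {(MvPolynomial.X (Sum.inl (⟨0, hn⟩ : Fin n)) : MvPolynomial (Fin n ⊕ Fin n) K)} *
        coverIdealOn K G {v : Fin n ⊕ Fin n |
          v ≠ Sum.inl (⟨0, hn⟩ : Fin n) ∧ v ≠ Sum.inr (⟨0, hn⟩ : Fin n)} := by
  have hleaf : ∀ w, G.Adj w (Sum.inr ⟨0, hn⟩) → w = Sum.inl ⟨0, hn⟩ :=
    fun _ hw => eq_inl_of_adj_inr_zero hn h2.1 h4 hw
  refine coverIdeal_eq_of_leaf K G (h3 _) hleaf (fun hx => hx.2 (h3 _)) ?_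
    (neighborsInClosedNbhdOutside_pairs h6 h2.1 h3 hleaf)
  rintro (i | i) hv hxv
  exacts [hv.1 hxv, hv.2 hxv]

/-- Lemma 3.4: J(G) = z_{N(x_1)} J(G_1) + x_1 J(G \ {x_1, y_1}). -/
theorem stmt_13 {n : ℕ} (hn : 0 < n) (K : Type*) [Field K]
    (G : SimpleGraph (Fin n ⊕ Fin n)) [DecidableRel G.Adj]
    (h1 : IsMinimalVertexCover G (Set.range Sum.inl))
    (h2 : IsMaximalIndepSet G (Set.range Sum.inr))
    (h3 : ∀ i : Fin n, G.Adj (Sum.inl i) (Sum.inr i))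
    (h4 : ∀ i j : Fin n, G.Adj (Sum.inl i) (Sum.inr j) → i ≤ j)
    (h5 : ∀ i j : Fin n, G.Adj (Sum.inl i) (Sum.inr j) → ¬ G.Adj (Sum.inl i) (Sum.inl j))
    (h6 : ∀ i j k : Fin n, i ≠ j → j ≠ k → i ≠ k →
      ∀ z ∈ ({Sum.inl i, Sum.inr i} : Set (Fin n ⊕ Fin n)),
        G.Adj z (Sum.inl j) → G.Adj (Sum.inr j) (Sum.inl k) → G.Adj z (Sum.inl k)) :
    coverIdeal K G =
      Ideal.span {∏ v ∈ G.neighborFinset (Sum.inl (⟨0, hn⟩ : Fin n)), MvPolynomial.X v} *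
        coverIdealOn K G {v : Fin n ⊕ Fin n |
          ¬ G.Adj (Sum.inl (⟨0, hn⟩ : Fin n)) (Sum.inl (Sum.elim id id v)) ∧
          ¬ G.Adj (Sum.inl (⟨0, hn⟩ : Fin n)) (Sum.inr (Sum.elim id id v))} +
      Ideal.span {(MvPolynomial.X (Sum.inl (⟨0, hn⟩ : Fin n)) : MvPolynomial (Fin n ⊕ Fin n) K)} *
        coverIdealOn K G {v : Fin n ⊕ Fin n |
          v ≠ Sum.inl (⟨0, hn⟩ : Fin n) ∧ v ≠ Sum.inr (⟨0, hn⟩ : Fin n)} :=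
  stmt_13_general hn K G h2 h3 h4 h6
end

section
/- Let H be a graph on {x_1,...,x_n}, G = H* its whisker graph, and J = J(G) its cover ideal in S = K[x_1,...,x_n,y_1,...,y_n]. Fix N ≥ 1 and minimal generators u_1,...,u_N, v_1,...,v_N of J. If for some index p one has deg_{x_p}(u_1⋯u_N) < deg_{x_p}(v_1⋯v_N), then there exists k ∈ [N] such that y_p divides u_k and x_p · (u_k / y_p) is again a minimal generator of J. -/
open MvPolynomial

noncomputable def ind {V : Type*} [DecidableEq V] (C : Finset V) : V →₀ ℕ :=
  ∑ v ∈ C, Finsupp.single v 1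

lemma ind_apply {V : Type*} [DecidableEq V] (C : Finset V) (x : V) :
    ind C x = if x ∈ C then 1 else 0 := by
  rw [ind, Finsupp.finset_sum_apply]
  simp [Finsupp.single_apply]

lemma ind_le_ind {V : Type*} [DecidableEq V] {C D : Finset V} (h : ind C ≤ ind D) :
    C ⊆ D := by
  intro x hx
  have := h x
  rw [ind_apply, ind_apply, if_pos hx] at this
  by_contra hxD
  rw [if_neg hxD] at this
  omega

lemma prod_X_eq {K : Type*} [Field K] {V : Type*} [DecidableEq V] (C : Finset V) :
    (∏ v ∈ C, (X v : MvPolynomial V K)) = monomial (ind C) 1 := by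
  induction C using Finset.induction with
  | empty => simp [ind, monomial_zero']
  | insert _ _ h ih =>
      rw [Finset.prod_insert h, ih, ← pow_one (X _), X_pow_eq_monomial, monomial_mul, mul_one]
      congr 1
      unfold ind
      rw [Finset.sum_insert h]

lemma exists_le_of_monomial_mem {K : Type*} [Field K] {V : Type*} [DecidableEq V]
    {G : SimpleGraph V} {u : V →₀ ℕ}
    (h : monomial u (1 : K) ∈ coverIdeal K G) :
    ∃ C : Finset V, IsMinimalVertexCover G ↑C ∧ ind C ≤ u := by
  obtain ⟨c, hsupp, hsum⟩ := Submodule.mem_span_set.mp h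
  by_contra hc
  push_neg at hc
  have h1 : coeff u (monomial u (1 : K)) = 1 := by simp [coeff_monomial]
  rw [← hsum] at h1
  rw [Finsupp.sum, coeff_sum] at h1
  have h0 : ∀ m ∈ c.support, coeff u (c m • m) = 0 := by
    intro m hm
    obtain ⟨C, hC, rfl⟩ := hsupp hm
    rw [prod_X_eq, smul_eq_mul, coeff_mul_monomial', if_neg (hc C hC)]
  rw [Finset.sum_eq_zero h0] at h1
  exact one_ne_zero h1.symm

lemma ind_mem {K : Type*} [Field K] {V : Type*} [DecidableEq V]
    {G : SimpleGraph V} {C : Finset V} (hC : IsMinimalVertexCover G ↑C) :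
    monomial (ind C) (1 : K) ∈ coverIdeal K G := by
  rw [← prod_X_eq]
  exact Ideal.subset_span ⟨C, hC, rfl⟩

lemma isMinimalGen_iff {K : Type*} [Field K] {V : Type*} [DecidableEq V]
    {G : SimpleGraph V} (u : V →₀ ℕ) :
    IsMinimalGen (coverIdeal K G) u ↔
      ∃ C : Finset V, IsMinimalVertexCover G ↑C ∧ u = ind C := by
  constructor
  · rintro ⟨hmem, hmin⟩
    obtain ⟨C, hC, hle⟩ := exists_le_of_monomial_mem hmem
    exact ⟨C, hC, (hmin (ind C) hle (ind_mem hC)).symm⟩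
  · rintro ⟨C, hC, rfl⟩
    refine ⟨ind_mem hC, fun w hw hwmem => ?_⟩
    obtain ⟨D, hD, hle⟩ := exists_le_of_monomial_mem hwmem
    have hDC : D ⊆ C := ind_le_ind (hle.trans hw)
    have : D = C := by
      by_contra hne
      exact hC.2 ↑D (Set.ssubset_iff_subset_ne.mpr
        ⟨Finset.coe_subset.mpr hDC, fun hcoe => hne (Finset.coe_injective hcoe)⟩) hD.1
    subst this
    exact le_antisymm hw hle

section Whisker
variable {n : ℕ} {H : SimpleGraph (Fin n)}

lemma whisker_adj_whisk (i : Fin n) : (whisker H).Adj (Sum.inl i) (Sum.inr i) := by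
  rw [whisker, SimpleGraph.fromRel_adj]
  exact ⟨by simp, Or.inl (Or.inr ⟨i, rfl, rfl⟩)⟩

lemma neighbor_inr {v : Fin n ⊕ Fin n} {i : Fin n} (h : (whisker H).Adj v (Sum.inr i)) :
    v = Sum.inl i := by
  rw [whisker, SimpleGraph.fromRel_adj] at h
  obtain ⟨-, h | h⟩ := h
  · rcases h with ⟨a, b, hv, hw, -⟩ | ⟨a, hv, hw⟩
    · exact absurd hw (by simp)
    · injection hw with h
      subst h
      exact hv
  · rcases h with ⟨a, b, hv, -, -⟩ | ⟨a, hv, -⟩ <;> exact absurd hv (by simp)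

lemma minCover_iff (C : Finset (Fin n ⊕ Fin n)) :
    IsMinimalVertexCover (whisker H) ↑C ↔
      (IsVertexCover (whisker H) ↑C ∧ ∀ i : Fin n, (Sum.inl i ∈ C ↔ Sum.inr i ∉ C)) := by
  constructor
  · rintro ⟨hcov, hmin⟩
    refine ⟨hcov, fun i => ?_⟩
    have hone : Sum.inl i ∈ C ∨ Sum.inr i ∈ C := by
      simpa using hcov (whisker_adj_whisk i)
    constructor
    · intro hl hr
      apply hmin (↑C \ {Sum.inr i})
      · exact Set.ssubset_iff_subset_ne.mpr ⟨Set.diff_subset, fun he => by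
          have : (Sum.inr i : Fin n ⊕ Fin n) ∈ (↑C \ {Sum.inr i} : Set _) := by
            rw [he]; exact hr
          simp at this⟩
      · intro v w hadj
        rcases hcov hadj with hvC | hwC
        · by_cases hv : v = Sum.inr i
          · subst hv
            have hw : w = Sum.inl i := neighbor_inr hadj.symm
            subst hw
            exact Or.inr ⟨hl, by simp⟩
          · exact Or.inl ⟨hvC, hv⟩
        · by_cases hw : w = Sum.inr i
          · subst hw
            have hv : v = Sum.inl i := neighbor_inr hadj
            subst hv
            exact Or.inl ⟨hl, by simp⟩
          · exact Or.inr ⟨hwC, hw⟩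
    · intro hr
      rcases hone with h | h
      · exact h
      · exact absurd h hr
  · rintro ⟨hcov, hone⟩
    refine ⟨hcov, fun D hD hDcov => ?_⟩
    obtain ⟨w, hwC, hwD⟩ := Set.exists_of_ssubset hD
    rcases w with i | i
    · have hr : Sum.inr i ∉ C := (hone i).mp hwC
      rcases hDcov (whisker_adj_whisk i) with h | h
      · exact hwD h
      · exact hr (hD.subset h)
    · have hl : Sum.inl i ∉ C := fun h => (hone i).mp h hwC
      rcases hDcov (whisker_adj_whisk i) with h | h
      · exact hl (hD.subset h)
      · exact hwD h

end Whisker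

/-- Key step of Theorem 4.5 (ℓ-exchange property for the cover ideal of a whisker
graph): if deg_{x_p}(u_1⋯u_N) < deg_{x_p}(v_1⋯v_N), then some u_k is divisible by y_p
and x_p (u_k / y_p) is again a minimal generator of J(G). -/
theorem stmt_15 {n : ℕ} (K : Type*) [Field K] (H : SimpleGraph (Fin n))
    (N : ℕ) (hN : 1 ≤ N)
    (u v : Fin N → ((Fin n ⊕ Fin n) →₀ ℕ))
    (hu : ∀ k : Fin N, IsMinimalGen (coverIdeal K (whisker H)) (u k))
    (hv : ∀ k : Fin N, IsMinimalGen (coverIdeal K (whisker H)) (v k))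
    (p : Fin n)
    (hlt : (∑ k : Fin N, u k) (Sum.inl p) < (∑ k : Fin N, v k) (Sum.inl p)) :
    ∃ k : Fin N, 1 ≤ u k (Sum.inr p) ∧
      IsMinimalGen (coverIdeal K (whisker H))
        (u k + Finsupp.single (Sum.inl p) 1 - Finsupp.single (Sum.inr p) 1) := by
  classical
  choose C hC hCu using fun k => (isMinimalGen_iff (u k)).mp (hu k)
  choose D hD hDv using fun k => (isMinimalGen_iff (v k)).mp (hv k)
  rw [Finsupp.finset_sum_apply, Finsupp.finset_sum_apply] at hlt
  -- each v k (inl p) ≤ 1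
  have hvle : ∀ k, v k (Sum.inl p) ≤ 1 := by
    intro k
    rw [hDv k, ind_apply]
    split <;> omega
  have hsum_v : (∑ k : Fin N, v k (Sum.inl p)) ≤ N := by
    calc (∑ k : Fin N, v k (Sum.inl p)) ≤ ∑ k : Fin N, 1 :=
          Finset.sum_le_sum fun k _ => hvle k
      _ = N := by simp
  -- each u k : value at inl p + value at inr p = 1
  have hone : ∀ k, u k (Sum.inl p) + u k (Sum.inr p) = 1 := by
    intro k
    rw [hCu k, ind_apply, ind_apply]
    have h := ((minCover_iff (C k)).mp (hC k)).2 p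
    by_cases hm : Sum.inl p ∈ C k
    · rw [if_pos hm, if_neg (h.mp hm)]
    · rw [if_neg hm]
      rw [if_pos (by by_contra hr; exact hm (h.mpr hr))]
  have hsum : (∑ k : Fin N, u k (Sum.inl p)) + (∑ k : Fin N, u k (Sum.inr p)) = N := by
    rw [← Finset.sum_add_distrib]
    simp [hone]
  have hpos : 0 < ∑ k : Fin N, u k (Sum.inr p) := by omega
  obtain ⟨k, -, hk⟩ := Finset.exists_ne_zero_of_sum_ne_zero (by omega :
    (∑ k : Fin N, u k (Sum.inr p)) ≠ 0)
  refine ⟨k, by omega, ?_⟩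
  -- facts about C k
  have hiff := ((minCover_iff (C k)).mp (hC k)).2 p
  have hinr : Sum.inr p ∈ C k := by
    by_contra hr
    rw [hCu k, ind_apply, if_neg hr] at hk
    exact hk rfl
  have hinl : Sum.inl p ∉ C k := fun h => (hiff.mp h) hinr
  -- the swapped cover
  set C' : Finset (Fin n ⊕ Fin n) := insert (Sum.inl p) ((C k).erase (Sum.inr p)) with hC'def
  have hC'cov : IsVertexCover (whisker H) ↑C' := by
    intro a b hadj
    rcases ((minCover_iff (C k)).mp (hC k)).1 hadj with ha | hb
    · by_cases hv : a = Sum.inr p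
      · subst hv
        have : b = Sum.inl p := neighbor_inr hadj.symm
        subst this
        exact Or.inr (by simp [hC'def])
      · exact Or.inl (by simp [hC'def, Finset.mem_erase, hv, ha])
    · by_cases hw : b = Sum.inr p
      · subst hw
        have : a = Sum.inl p := neighbor_inr hadj
        subst this
        exact Or.inl (by simp [hC'def])
      · exact Or.inr (by simp [hC'def, Finset.mem_erase, hw, hb])
  have hC'min : IsMinimalVertexCover (whisker H) ↑C' := by
    rw [minCover_iff]
    refine ⟨hC'cov, fun i => ?_⟩
    by_cases hip : i = p
    · subst hip
      simp [hC'def]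
    · have := ((minCover_iff (C k)).mp (hC k)).2 i
      simp only [hC'def, Finset.mem_insert, Finset.mem_erase]
      constructor
      · rintro (h | ⟨-, h⟩)
        · exact absurd (Sum.inl.injEq i p ▸ h) (by simp [hip])
        · intro hcon
          rcases hcon with h' | ⟨-, h'⟩
          · simp at h'
          · exact (this.mp h) h'
      · intro h
        right
        push_neg at h
        refine ⟨by simp, ?_⟩
        by_contra hcon
        have : Sum.inr i ∈ C k := by
          by_contra hr
          exact hcon (this.mpr hr)
        exact h.2 (by simp [Sum.inr.injEq, hip]) this
  have heq : u k + Finsupp.single (Sum.inl p) 1 - Finsupp.single (Sum.inr p) 1 = ind C' := by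
    ext x
    rw [Finsupp.tsub_apply, Finsupp.add_apply, hCu k, ind_apply, ind_apply,
      Finsupp.single_apply, Finsupp.single_apply]
    rcases x with i | i
    · by_cases hip : i = p
      · subst hip
        simp [hinl, hC'def]
      · have hmem : (Sum.inl i ∈ C') ↔ (Sum.inl i ∈ C k) := by
          simp only [hC'def, Finset.mem_insert, Finset.mem_erase]
          constructor
          · rintro (h | ⟨-, h⟩)
            · exact absurd (by injection h) hip
            · exact h
          · intro h; exact Or.inr ⟨by simp, h⟩
        simp only [hmem]
        have h1 : ¬ ((Sum.inl p : Fin n ⊕ Fin n) = Sum.inl i) := by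
          simp [Ne.symm hip]
        have h2 : ¬ ((Sum.inr p : Fin n ⊕ Fin n) = Sum.inl i) := by simp
        rw [if_neg h1, if_neg h2]
        split <;> simp
    · by_cases hip : i = p
      · subst hip
        have h3 : (Sum.inr i : Fin n ⊕ Fin n) ∉ C' := by
          simp [hC'def]
        simp [hinr, h3]
      · have hmem : (Sum.inr i ∈ C') ↔ (Sum.inr i ∈ C k) := by
          simp [hC'def, Finset.mem_insert, Finset.mem_erase, hip]
        simp only [hmem]
        have h1 : ¬ ((Sum.inl p : Fin n ⊕ Fin n) = Sum.inr i) := by simp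
        have h2 : ¬ ((Sum.inr p : Fin n ⊕ Fin n) = Sum.inr i) := by
          simp [Ne.symm hip]
        rw [if_neg h1, if_neg h2]
        split <;> simp
  rw [heq]
  exact (isMinimalGen_iff _).mpr ⟨C', hC'min, rfl⟩
end
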